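/- arXiv:math/0509290 — 3 statements merged into one kernel-verified Lean document; each statement's English description precedes it below -/
import Mathlib

section
/- Let u_1,...,u_n be positive reals linearly independent over ℚ and H_1 = Σ_j u_j(x_j²+ξ_j²). A polynomial P on ℝ^{2n} satisfies {H_1, P} = 0 if and only if, when written in the complex variables z_j = x_j + iξ_j, P is a linear combination of diagonal monomials z^α z̄^α; equivalently, P is a polynomial in the quantities x_1²+ξ_1², ..., x_n²+ξ_n². -/
open MvPolynomial

def LinIndepQ {n : ℕ} (u : Fin n → ℝ) : Prop :=
  ∀ q : Fin n → ℚ, (∑ j, (q j : ℝ) * u j) = 0 → ∀ j, q j = 0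

noncomputable def poisson {n : ℕ} (G F : MvPolynomial (Fin n ⊕ Fin n) ℝ) :
    MvPolynomial (Fin n ⊕ Fin n) ℝ :=
  ∑ j, (pderiv (Sum.inr j) G * pderiv (Sum.inl j) F
        - pderiv (Sum.inl j) G * pderiv (Sum.inr j) F)

noncomputable def Hone {n : ℕ} (u : Fin n → ℝ) : MvPolynomial (Fin n ⊕ Fin n) ℝ :=
  ∑ j, C (u j) * (X (Sum.inl j) ^ 2 + X (Sum.inr j) ^ 2)

/-- The substitution `x_j = (z_j + z̄_j)/2`, `ξ_j = (z_j - z̄_j)/(2i)`, expressing a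
real polynomial in `(x,ξ)` as a complex polynomial in the variables `z` (indexed
by `Sum.inl`) and `z̄` (indexed by `Sum.inr`). -/
noncomputable def toComplexZ {n : ℕ} :
    MvPolynomial (Fin n ⊕ Fin n) ℝ →ₐ[ℝ] MvPolynomial (Fin n ⊕ Fin n) ℂ :=
  aeval (Sum.elim
    (fun j => C ((1 : ℂ) / 2) * (X (Sum.inl j) + X (Sum.inr j)))
    (fun j => C (-Complex.I / 2) * (X (Sum.inl j) - X (Sum.inr j))))

def IsDiagExp {n : ℕ} (d : (Fin n ⊕ Fin n) →₀ ℕ) : Prop :=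
  ∀ j, d (Sum.inl j) = d (Sum.inr j)

/-!
In the coordinates `z = x + iξ`, `z̄ = x - iξ` the Hamiltonian vector field `{H₁, ·}` becomes the
derivation with `z_j ↦ -2iu_j z_j` and `z̄_j ↦ 2iu_j z̄_j`, which multiplies the monomial
`z^α z̄^β` by `2i ∑ u_j (β_j - α_j)`. By the `ℚ`-linear independence of the `u_j` this scalar
vanishes exactly when `α = β`, and the change of coordinates is injective, so `{H₁, P} = 0` iff
only diagonal monomials `z^α z̄^α = ∏ (x_j² + ξ_j²)^α_j` occur in `P`. The coefficients of these
are real, because the substitution intertwines complex conjugation of coefficients with the swap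
`z ↔ z̄`; hence `P` is then a real polynomial in the `x_j² + ξ_j²`.
-/

namespace MvPolynomial

variable {σ R : Type*} [CommSemiring R]

theorem derivation_monomial_one_eq_weight_smul
    (D : Derivation R (MvPolynomial σ R) (MvPolynomial σ R)) (w : σ → R)
    (hD : ∀ i, D (X i) = w i • X i) (d : σ →₀ ℕ) :
    D (monomial d 1) = Finsupp.weight w d • monomial d 1 := by
  induction d using Finsupp.induction_linear with
  | zero => simp
  | add a b ha hb =>
    rw [← one_mul (1 : R), ← monomial_mul, D.leibniz, ha, hb, map_add, add_smul, smul_eq_mul,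
      smul_eq_mul, mul_smul_comm, mul_smul_comm, mul_comm, add_comm]
  | single i k =>
    rw [← X_pow_eq_monomial, D.leibniz_pow, hD, Finsupp.weight_single]
    cases k with
    | zero => simp
    | succ k =>
      rw [Nat.add_sub_cancel, smul_assoc, pow_succ, ← smul_eq_mul (X i ^ k), smul_comm (X i ^ k)]

theorem derivation_monomial_eq_weight_smul
    (D : Derivation R (MvPolynomial σ R) (MvPolynomial σ R)) (w : σ → R)
    (hD : ∀ i, D (X i) = w i • X i) (d : σ →₀ ℕ) (c : R) :
    D (monomial d c) = Finsupp.weight w d • monomial d c := by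
  rw [← mul_one c, ← smul_eq_mul, ← smul_monomial, D.map_smul,
    derivation_monomial_one_eq_weight_smul D w hD, smul_comm]

theorem coeff_derivation_eq_weight_mul
    (D : Derivation R (MvPolynomial σ R) (MvPolynomial σ R)) (w : σ → R)
    (hD : ∀ i, D (X i) = w i • X i) (p : MvPolynomial σ R) (e : σ →₀ ℕ) :
    coeff e (D p) = Finsupp.weight w e * coeff e p := by
  classical
  induction p using MvPolynomial.induction_on' with
  | monomial d c =>
    rw [derivation_monomial_eq_weight_smul D w hD, coeff_smul, coeff_monomial, smul_eq_mul]
    split_ifs with h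
    · rw [h]
    · simp
  | add p q hp hq => rw [map_add, coeff_add, coeff_add, hp, hq, mul_add]

theorem derivation_eq_zero_iff_forall_weight_eq_zero [NoZeroDivisors R]
    (D : Derivation R (MvPolynomial σ R) (MvPolynomial σ R)) (w : σ → R)
    (hD : ∀ i, D (X i) = w i • X i) (p : MvPolynomial σ R) :
    D p = 0 ↔ ∀ d ∈ p.support, Finsupp.weight w d = 0 := by
  simp only [MvPolynomial.ext_iff, coeff_derivation_eq_weight_mul D w hD, coeff_zero, mul_eq_zero,
    mem_support_iff]
  exact forall_congr' fun d => or_iff_not_imp_right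

end MvPolynomial

section

variable {n : ℕ}

noncomputable def poissonDerivation (G : MvPolynomial (Fin n ⊕ Fin n) ℝ) :
    Derivation ℝ (MvPolynomial (Fin n ⊕ Fin n) ℝ) (MvPolynomial (Fin n ⊕ Fin n) ℝ) :=
  ∑ j, (pderiv (Sum.inr j) G • pderiv (Sum.inl j) - pderiv (Sum.inl j) G • pderiv (Sum.inr j))

theorem poissonDerivation_apply (G F : MvPolynomial (Fin n ⊕ Fin n) ℝ) :
    poissonDerivation G F = poisson G F := by
  rw [poissonDerivation, ← Derivation.coeFnAddMonoidHom_apply, map_sum, Finset.sum_apply]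
  simp [poisson]

theorem pderiv_inl_Hone (u : Fin n → ℝ) (k : Fin n) :
    pderiv (Sum.inl k) (Hone u) = (2 * u k) • X (Sum.inl k) := by
  simp [Hone, Pi.single_apply, ← smul_eq_C_mul, two_mul, smul_add, add_smul]

theorem pderiv_inr_Hone (u : Fin n → ℝ) (k : Fin n) :
    pderiv (Sum.inr k) (Hone u) = (2 * u k) • X (Sum.inr k) := by
  simp [Hone, Pi.single_apply, ← smul_eq_C_mul, two_mul, smul_add, add_smul]

theorem poisson_X_inl (G : MvPolynomial (Fin n ⊕ Fin n) ℝ) (k : Fin n) :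
    poisson G (X (Sum.inl k)) = pderiv (Sum.inr k) G := by
  simp [poisson, pderiv_X, Pi.single_apply]

theorem poisson_X_inr (G : MvPolynomial (Fin n ⊕ Fin n) ℝ) (k : Fin n) :
    poisson G (X (Sum.inr k)) = -pderiv (Sum.inl k) G := by
  simp [poisson, pderiv_X, Pi.single_apply]

theorem toComplexZ_X_inl (k : Fin n) :
    toComplexZ (X (Sum.inl k) : MvPolynomial (Fin n ⊕ Fin n) ℝ) =
      (1 / 2 : ℂ) • (X (Sum.inl k) + X (Sum.inr k)) := by
  simp [toComplexZ, smul_eq_C_mul, mul_add]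

theorem toComplexZ_X_inr (k : Fin n) :
    toComplexZ (X (Sum.inr k) : MvPolynomial (Fin n ⊕ Fin n) ℝ) =
      (-Complex.I / 2) • (X (Sum.inl k) - X (Sum.inr k)) := by
  simp [toComplexZ, smul_eq_C_mul]

noncomputable def fromComplexZ :
    MvPolynomial (Fin n ⊕ Fin n) ℂ →ₐ[ℂ] MvPolynomial (Fin n ⊕ Fin n) ℂ :=
  aeval (Sum.elim (fun j => X (Sum.inl j) + Complex.I • X (Sum.inr j))
    (fun j => X (Sum.inl j) - Complex.I • X (Sum.inr j)))

theorem fromComplexZ_toComplexZ (P : MvPolynomial (Fin n ⊕ Fin n) ℝ) :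
    fromComplexZ (toComplexZ P) = map (algebraMap ℝ ℂ) P := by
  have h : (fromComplexZ.restrictScalars ℝ).comp toComplexZ =
      mapAlgHom (Algebra.ofId ℝ ℂ) (σ := Fin n ⊕ Fin n) := by
    refine algHom_ext fun i => ?_
    rcases i with k | k
    · rw [AlgHom.comp_apply, AlgHom.restrictScalars_apply, toComplexZ_X_inl, map_smul, map_add,
        fromComplexZ, aeval_X, aeval_X, Sum.elim_inl, Sum.elim_inr, mapAlgHom_apply, map_X]
      module
    · rw [AlgHom.comp_apply, AlgHom.restrictScalars_apply, toComplexZ_X_inr, map_smul, map_sub,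
        fromComplexZ, aeval_X, aeval_X, Sum.elim_inl, Sum.elim_inr, mapAlgHom_apply, map_X]
      match_scalars
      · ring
      · linear_combination (-1 : ℂ) * Complex.I_sq
  exact DFunLike.congr_fun h P

theorem toComplexZ_injective : Function.Injective (toComplexZ (n := n)) := fun P Q h =>
  map_injective _ (algebraMap ℝ ℂ).injective <| by
    rw [← fromComplexZ_toComplexZ, ← fromComplexZ_toComplexZ, h]

theorem rename_swap_map_conj_toComplexZ (P : MvPolynomial (Fin n ⊕ Fin n) ℝ) :
    rename Sum.swap (map (starRingEnd ℂ) (toComplexZ P)) = toComplexZ P := by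
  induction P using MvPolynomial.induction_on with
  | C a => simp
  | add p q hp hq => simp only [map_add, hp, hq]
  | mul_X p i hp =>
    rw [map_mul, map_mul, map_mul, hp]
    congr 1
    rcases i with k | k
    · simp only [toComplexZ_X_inl, smul_eq_C_mul, map_mul, map_add, map_C, map_X, rename_C,
        rename_X, Sum.swap_inl, Sum.swap_inr, map_div₀, map_one, map_ofNat]
      ring
    · simp only [toComplexZ_X_inr, smul_eq_C_mul, map_mul, map_sub, map_C, map_X, rename_C,
        rename_X, Sum.swap_inl, Sum.swap_inr, map_div₀, map_neg, Complex.conj_I, map_ofNat,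
        neg_neg, neg_div]
      ring

theorem IsDiagExp.sumElim_comapDomain {d : (Fin n ⊕ Fin n) →₀ ℕ} (hd : IsDiagExp d) :
    Finsupp.sumElim (d.comapDomain Sum.inl Sum.inl_injective.injOn)
      (d.comapDomain Sum.inl Sum.inl_injective.injOn) = d := by
  ext (j | j)
  · rfl
  · exact hd j

theorem IsDiagExp.ofReal_re_coeff_toComplexZ {d : (Fin n ⊕ Fin n) →₀ ℕ} (hd : IsDiagExp d)
    (P : MvPolynomial (Fin n ⊕ Fin n) ℝ) :
    ((coeff d (toComplexZ P)).re : ℂ) = coeff d (toComplexZ P) := by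
  rw [← Complex.conj_eq_iff_re, ← hd.sumElim_comapDomain]
  conv_rhs => rw [← rename_swap_map_conj_toComplexZ P, ← Finsupp.mapDomain_swap_sumElim]
  rw [coeff_rename_mapDomain _ (Function.Involutive.injective Sum.swap_swap), coeff_map]

noncomputable def rotationWeight (u : Fin n → ℝ) : Fin n ⊕ Fin n → ℂ :=
  Sum.elim (fun j => -(2 * u j * Complex.I)) (fun j => 2 * u j * Complex.I)

noncomputable def rotationDerivation (u : Fin n → ℝ) :
    Derivation ℂ (MvPolynomial (Fin n ⊕ Fin n) ℂ) (MvPolynomial (Fin n ⊕ Fin n) ℂ) :=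
  mkDerivation ℂ fun i => rotationWeight u i • X i

theorem rotationDerivation_X (u : Fin n → ℝ) (i : Fin n ⊕ Fin n) :
    rotationDerivation u (X i) = rotationWeight u i • X i :=
  mkDerivation_X ℂ _ i

theorem toComplexZ_poisson_Hone_X (u : Fin n → ℝ) (i : Fin n ⊕ Fin n) :
    toComplexZ (poisson (Hone u) (X i)) = rotationDerivation u (toComplexZ (X i)) := by
  cases i with
  | inl k =>
    rw [poisson_X_inl, pderiv_inr_Hone, toComplexZ_X_inl, map_smul, toComplexZ_X_inr,
      Derivation.map_smul, map_add, rotationDerivation_X, rotationDerivation_X]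
    simp only [rotationWeight, Sum.elim_inl, Sum.elim_inr]
    module
  | inr k =>
    rw [poisson_X_inr, pderiv_inl_Hone, map_neg, map_smul, toComplexZ_X_inl, toComplexZ_X_inr,
      Derivation.map_smul, map_sub, rotationDerivation_X, rotationDerivation_X]
    simp only [rotationWeight, Sum.elim_inl, Sum.elim_inr]
    match_scalars <;> linear_combination (-(u k : ℂ)) * Complex.I_sq

theorem toComplexZ_poisson_Hone (u : Fin n → ℝ) (P : MvPolynomial (Fin n ⊕ Fin n) ℝ) :
    toComplexZ (poisson (Hone u) P) = rotationDerivation u (toComplexZ P) := by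
  simp only [← poissonDerivation_apply]
  induction P using MvPolynomial.induction_on with
  | C a => simp
  | add p q hp hq => simp only [map_add, hp, hq]
  | mul_X p i hp =>
    rw [Derivation.leibniz, map_add, smul_eq_mul, smul_eq_mul, map_mul, map_mul, hp,
      poissonDerivation_apply, toComplexZ_poisson_Hone_X, map_mul, Derivation.leibniz,
      smul_eq_mul, smul_eq_mul]

-- The coefficients are written as rationals so that `LinIndepQ` applies directly.
theorem weight_rotationWeight (u : Fin n → ℝ) (d : (Fin n ⊕ Fin n) →₀ ℕ) :
    Finsupp.weight (rotationWeight u) d =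
      2 * Complex.I * ((∑ j, (((d (Sum.inr j) : ℚ) - d (Sum.inl j) : ℚ) : ℝ) * u j : ℝ) : ℂ) := by
  simp only [Finsupp.weight_eq_sum, Fintype.sum_sum_type, rotationWeight, Sum.elim_inl,
    Sum.elim_inr, ← Finset.sum_add_distrib, nsmul_eq_mul]
  push_cast
  rw [Finset.mul_sum]
  exact Finset.sum_congr rfl fun j _ => by ring

theorem weight_rotationWeight_eq_zero_iff {u : Fin n → ℝ} (hind : LinIndepQ u)
    (d : (Fin n ⊕ Fin n) →₀ ℕ) :
    Finsupp.weight (rotationWeight u) d = 0 ↔ IsDiagExp d := by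
  rw [weight_rotationWeight, mul_eq_zero, or_iff_right (by simp), Complex.ofReal_eq_zero]
  refine ⟨fun h j => ?_, fun h => Finset.sum_eq_zero fun j _ => by simp [h j]⟩
  exact_mod_cast (sub_eq_zero.mp (hind _ h j)).symm

theorem poisson_Hone_eq_zero_iff {u : Fin n → ℝ} (hind : LinIndepQ u)
    (P : MvPolynomial (Fin n ⊕ Fin n) ℝ) :
    poisson (Hone u) P = 0 ↔ ∀ d ∈ (toComplexZ P).support, IsDiagExp d := by
  rw [← map_eq_zero_iff _ toComplexZ_injective, toComplexZ_poisson_Hone,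
    derivation_eq_zero_iff_forall_weight_eq_zero _ _ (rotationDerivation_X u)]
  simp only [weight_rotationWeight_eq_zero_iff hind]

noncomputable def harmonicAction (j : Fin n) : MvPolynomial (Fin n ⊕ Fin n) ℝ :=
  X (Sum.inl j) ^ 2 + X (Sum.inr j) ^ 2

theorem toComplexZ_harmonicAction (j : Fin n) :
    toComplexZ (harmonicAction j) = X (Sum.inl j) * X (Sum.inr j) := by
  rw [harmonicAction, map_add, map_pow, map_pow, toComplexZ_X_inl, toComplexZ_X_inr, smul_pow,
    smul_pow, add_sq', sub_sq', mul_assoc, two_mul]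
  match_scalars
  · linear_combination (1 / 4 : ℂ) * Complex.I_sq
  · linear_combination (1 / 4 : ℂ) * Complex.I_sq
  · linear_combination (-1 / 2 : ℂ) * Complex.I_sq

theorem toComplexZ_aeval_harmonicAction (f : MvPolynomial (Fin n) ℝ) :
    toComplexZ (aeval harmonicAction f) =
      aeval (fun j => X (Sum.inl j) * X (Sum.inr j)) f := by
  rw [← AlgHom.comp_apply, comp_aeval]
  simp only [toComplexZ_harmonicAction]

theorem aeval_X_inl_mul_X_inr_monomial_one (m : Fin n →₀ ℕ) :
    aeval (fun j => X (Sum.inl j) * X (Sum.inr j) : Fin n → MvPolynomial (Fin n ⊕ Fin n) ℂ)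
      (monomial m (1 : ℝ)) = monomial (Finsupp.sumElim m m) 1 := by
  induction m using Finsupp.induction_linear with
  | zero => simp
  | add a b ha hb =>
    rw [Finsupp.sumElim_add, ← mul_one (1 : ℂ), ← monomial_mul, ← ha, ← hb, ← map_mul,
      monomial_mul, mul_one]
  | single j k =>
    rw [← X_pow_eq_monomial, map_pow, aeval_X, Finsupp.sumElim_single_single, mul_pow,
      X_pow_eq_monomial, X_pow_eq_monomial, monomial_mul, one_mul]

theorem aeval_X_inl_mul_X_inr_monomial (m : Fin n →₀ ℕ) (r : ℝ) :
    aeval (fun j => X (Sum.inl j) * X (Sum.inr j) : Fin n → MvPolynomial (Fin n ⊕ Fin n) ℂ)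
      (monomial m r) = monomial (Finsupp.sumElim m m) (r : ℂ) := by
  have hsmul : monomial m r = r • monomial m (1 : ℝ) := by
    rw [smul_monomial, smul_eq_mul, mul_one]
  rw [hsmul, map_smul, aeval_X_inl_mul_X_inr_monomial_one, smul_monomial, Complex.real_smul,
    mul_one]

theorem isDiagExp_of_mem_support_toComplexZ_aeval_harmonicAction (f : MvPolynomial (Fin n) ℝ)
    {d : (Fin n ⊕ Fin n) →₀ ℕ}
    (hd : d ∈ (toComplexZ (aeval harmonicAction f)).support) :
    IsDiagExp d := by
  rw [toComplexZ_aeval_harmonicAction, f.as_sum, map_sum, mem_support_iff, coeff_sum] at hd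
  obtain ⟨m, -, hm⟩ := Finset.exists_ne_zero_of_sum_ne_zero hd
  rw [aeval_X_inl_mul_X_inr_monomial, coeff_monomial] at hm
  split_ifs at hm with hmd
  · exact hmd ▸ fun _ => rfl
  · exact absurd rfl hm

theorem exists_eq_aeval_harmonicAction (P : MvPolynomial (Fin n ⊕ Fin n) ℝ)
    (hP : ∀ d ∈ (toComplexZ P).support, IsDiagExp d) :
    ∃ f : MvPolynomial (Fin n) ℝ, P = aeval harmonicAction f := by
  set Q := toComplexZ P
  refine ⟨∑ d ∈ Q.support,
    monomial (d.comapDomain Sum.inl Sum.inl_injective.injOn) (coeff d Q).re, ?_⟩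
  apply toComplexZ_injective
  change Q = _
  rw [toComplexZ_aeval_harmonicAction, map_sum]
  conv_lhs => rw [← Q.support_sum_monomial_coeff]
  refine Finset.sum_congr rfl fun d hd => ?_
  rw [aeval_X_inl_mul_X_inr_monomial, (hP d hd).sumElim_comapDomain,
    (hP d hd).ofReal_re_coeff_toComplexZ]

end

theorem stmt6_general {n : ℕ} (u : Fin n → ℝ) (hind : LinIndepQ u)
    (P : MvPolynomial (Fin n ⊕ Fin n) ℝ) :
    (poisson (Hone u) P = 0 ↔ ∀ d ∈ (toComplexZ P).support, IsDiagExp d) ∧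
    (poisson (Hone u) P = 0 ↔
      ∃ f : MvPolynomial (Fin n) ℝ,
        P = aeval (fun j => X (Sum.inl j) ^ 2 + X (Sum.inr j) ^ 2 :
          Fin n → MvPolynomial (Fin n ⊕ Fin n) ℝ) f) := by
  have hker := poisson_Hone_eq_zero_iff hind P
  refine ⟨hker, hker.trans ⟨exists_eq_aeval_harmonicAction P, ?_⟩⟩
  rintro ⟨f, rfl⟩ d hd
  exact isDiagExp_of_mem_support_toComplexZ_aeval_harmonicAction f hd

theorem stmt6 {n : ℕ} (u : Fin n → ℝ) (hpos : ∀ j, 0 < u j) (hind : LinIndepQ u)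
    (P : MvPolynomial (Fin n ⊕ Fin n) ℝ) :
    (poisson (Hone u) P = 0 ↔ ∀ d ∈ (toComplexZ P).support, IsDiagExp d) ∧
    (poisson (Hone u) P = 0 ↔
      ∃ f : MvPolynomial (Fin n) ℝ,
        P = aeval (fun j => X (Sum.inl j) ^ 2 + X (Sum.inr j) ^ 2 :
          Fin n → MvPolynomial (Fin n ⊕ Fin n) ℝ) f) :=
  stmt6_general u hind P
end

section
/- Let u_1,...,u_n be positive reals linearly independent over ℚ and H_1 = Σ_j u_j(x_j²+ξ_j²). For every polynomial R on ℝ^{2n} homogeneous of degree 2N there exist polynomials G and H, with H of the form H = h(x_1²+ξ_1²,...,x_n²+ξ_n²) for a polynomial h homogeneous of degree N, such that {H_1, G} = R − H. The polynomial h is uniquely determined by R. -/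
open MvPolynomial

/-- Substitution `s_j ↦ x_j² + ξ_j²`. -/
noncomputable def subSq {n : ℕ} (h : MvPolynomial (Fin n) ℝ) :
    MvPolynomial (Fin n ⊕ Fin n) ℝ :=
  aeval (fun j => X (Sum.inl j) ^ 2 + X (Sum.inr j) ^ 2) h

namespace Stmt7
noncomputable section
open Complex Finsupp

variable {n N : ℕ}

abbrev B (n : ℕ) := MvPolynomial (Fin n ⊕ Fin n) ℂ

/-- Complexification of coefficients. -/
def cx {σ : Type*} : MvPolynomial σ ℝ →+* MvPolynomial σ ℂ := map (algebraMap ℝ ℂ)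

/-- Coefficientwise complex conjugation. -/
def cj {σ : Type*} : MvPolynomial σ ℂ →+* MvPolynomial σ ℂ := map (starRingEnd ℂ)

lemma cj_cj {σ : Type*} (p : MvPolynomial σ ℂ) : cj (cj p) = p := by
  rw [cj, map_map, show (starRingEnd ℂ).comp (starRingEnd ℂ) = RingHom.id ℂ from
    RingHom.ext fun z => by simp, map_id]

lemma cj_cx {σ : Type*} (p : MvPolynomial σ ℝ) : cj (cx p) = cx p := by
  rw [cj, cx, map_map, show (starRingEnd ℂ).comp (algebraMap ℝ ℂ) = algebraMap ℝ ℂ from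
    RingHom.ext fun r => by simp [Complex.conj_ofReal]]

lemma cx_injective {σ : Type*} : Function.Injective (cx (σ := σ)) :=
  map_injective _ Complex.ofReal_injective

lemma cj_C_mul {σ : Type*} (a : ℂ) (p : MvPolynomial σ ℂ) :
    cj (C a * p) = C (starRingEnd ℂ a) * cj p := by
  rw [cj, map_mul, map_C]

/-- The Poisson bracket operator, generalized. -/
def Lop {R : Type*} [CommRing R] (H G : MvPolynomial (Fin n ⊕ Fin n) R) :
    MvPolynomial (Fin n ⊕ Fin n) R :=
  ∑ j, (pderiv (Sum.inr j) H * pderiv (Sum.inl j) G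
        - pderiv (Sum.inl j) H * pderiv (Sum.inr j) G)

lemma poisson_eq_lop (H G : MvPolynomial (Fin n ⊕ Fin n) ℝ) : poisson H G = Lop H G := rfl

variable {R : Type*} [CommRing R]

lemma lop_add (H p q : MvPolynomial (Fin n ⊕ Fin n) R) :
    Lop H (p + q) = Lop H p + Lop H q := by
  simp only [Lop, map_add, mul_add]
  rw [← Finset.sum_add_distrib]
  exact Finset.sum_congr rfl fun j _ => by ring

lemma lop_sub (H p q : MvPolynomial (Fin n ⊕ Fin n) R) :
    Lop H (p - q) = Lop H p - Lop H q := by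
  simp only [Lop, map_sub, mul_sub]
  rw [← Finset.sum_sub_distrib]
  exact Finset.sum_congr rfl fun j _ => by ring

lemma lop_C (H : MvPolynomial (Fin n ⊕ Fin n) R) (a : R) : Lop H (C a) = 0 := by
  simp [Lop, pderiv_C]

lemma lop_mul (H p q : MvPolynomial (Fin n ⊕ Fin n) R) :
    Lop H (p * q) = p * Lop H q + q * Lop H p := by
  simp only [Lop, pderiv_mul]
  rw [Finset.mul_sum, Finset.mul_sum, ← Finset.sum_add_distrib]
  exact Finset.sum_congr rfl fun j _ => by ring

lemma lop_smul (H : MvPolynomial (Fin n ⊕ Fin n) R) (a : R) (p : MvPolynomial (Fin n ⊕ Fin n) R) :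
    Lop H (a • p) = a • Lop H p := by
  rw [← C_mul', lop_mul, lop_C, mul_zero, add_zero, C_mul']

/-- `Lop H` bundled as a linear map. -/
def LopLin (H : MvPolynomial (Fin n ⊕ Fin n) R) :
    MvPolynomial (Fin n ⊕ Fin n) R →ₗ[R] MvPolynomial (Fin n ⊕ Fin n) R where
  toFun := Lop H
  map_add' := lop_add H
  map_smul' := lop_smul H

lemma lop_sum {ι : Type*} (H : MvPolynomial (Fin n ⊕ Fin n) R) (s : Finset ι)
    (f : ι → MvPolynomial (Fin n ⊕ Fin n) R) :
    Lop H (∑ i ∈ s, f i) = ∑ i ∈ s, Lop H (f i) :=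
  map_sum (LopLin H) f s

lemma lop_X_inl (H : MvPolynomial (Fin n ⊕ Fin n) R) (k : Fin n) :
    Lop H (X (Sum.inl k)) = pderiv (Sum.inr k) H := by
  rw [Lop, Finset.sum_eq_single k]
  · simp
  · intro j _ hjk
    rw [pderiv_X_of_ne (by simp [(Ne.symm hjk)]), pderiv_X_of_ne (by simp)]
    ring
  · intro h; exact absurd (Finset.mem_univ k) h

lemma lop_X_inr (H : MvPolynomial (Fin n ⊕ Fin n) R) (k : Fin n) :
    Lop H (X (Sum.inr k)) = -pderiv (Sum.inl k) H := by
  rw [Lop, Finset.sum_eq_single k]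
  · simp
  · intro j _ hjk
    rw [pderiv_X_of_ne (by simp), pderiv_X_of_ne (by simp [(Ne.symm hjk)])]
    ring
  · intro h; exact absurd (Finset.mem_univ k) h

lemma cx_lop (H G : MvPolynomial (Fin n ⊕ Fin n) ℝ) :
    cx (Lop H G) = Lop (cx H) (cx G) := by
  simp only [Lop, cx, map_sum, map_sub, map_mul, pderiv_map]

lemma cj_lop (H G : B n) (hH : cj H = H) : cj (Lop H G) = Lop H (cj G) := by
  simp only [cj] at hH ⊢
  simp only [Lop, map_sum, map_sub, map_mul, ← pderiv_map, hH]

variable (u : Fin n → ℝ)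

/-- The quadratic Hamiltonian in the z/w variables. -/
def Ku : B n := ∑ j, C ((-2) * I * (u j : ℂ)) * (X (Sum.inl j) * X (Sum.inr j))

lemma cx_Hone : cx (Hone u) = ∑ j, C ((u j : ℂ)) * (X (Sum.inl j) ^ 2 + X (Sum.inr j) ^ 2) := by
  simp [Hone, cx, map_sum, map_mul, map_add, map_pow]

lemma pderiv_cxHone_inl (k : Fin n) :
    pderiv (Sum.inl k) (cx (Hone u)) = C ((u k : ℂ)) * (2 * X (Sum.inl k)) := by
  rw [cx_Hone, map_sum, Finset.sum_eq_single k]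
  · rw [pderiv_C_mul, map_add, pderiv_pow, pderiv_pow, pderiv_X_self,
      pderiv_X_of_ne (by simp)]
    ring
  · intro j _ hjk
    rw [pderiv_C_mul, map_add, pderiv_pow, pderiv_pow,
      pderiv_X_of_ne (by simp [hjk]), pderiv_X_of_ne (by simp)]
    ring
  · intro h; exact absurd (Finset.mem_univ k) h

lemma pderiv_cxHone_inr (k : Fin n) :
    pderiv (Sum.inr k) (cx (Hone u)) = C ((u k : ℂ)) * (2 * X (Sum.inr k)) := by
  rw [cx_Hone, map_sum, Finset.sum_eq_single k]
  · rw [pderiv_C_mul, map_add, pderiv_pow, pderiv_pow, pderiv_X_self,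
      pderiv_X_of_ne (by simp)]
    ring
  · intro j _ hjk
    rw [pderiv_C_mul, map_add, pderiv_pow, pderiv_pow,
      pderiv_X_of_ne (by simp), pderiv_X_of_ne (by simp [hjk])]
    ring
  · intro h; exact absurd (Finset.mem_univ k) h

lemma pderiv_Ku_inl (k : Fin n) :
    pderiv (Sum.inl k) (Ku u) = C ((-2) * I * (u k : ℂ)) * X (Sum.inr k) := by
  rw [Ku, map_sum, Finset.sum_eq_single k]
  · rw [pderiv_C_mul, pderiv_mul, pderiv_X_self, pderiv_X_of_ne (by simp)]
    ring
  · intro j _ hjk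
    rw [pderiv_C_mul, pderiv_mul, pderiv_X_of_ne (by simp [hjk]),
      pderiv_X_of_ne (by simp)]
    ring
  · intro h; exact absurd (Finset.mem_univ k) h

lemma pderiv_Ku_inr (k : Fin n) :
    pderiv (Sum.inr k) (Ku u) = C ((-2) * I * (u k : ℂ)) * X (Sum.inl k) := by
  rw [Ku, map_sum, Finset.sum_eq_single k]
  · rw [pderiv_C_mul, pderiv_mul, pderiv_X_of_ne (by simp), pderiv_X_self]
    ring
  · intro j _ hjk
    rw [pderiv_C_mul, pderiv_mul, pderiv_X_of_ne (by simp),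
      pderiv_X_of_ne (by simp [hjk])]
    ring
  · intro h; exact absurd (Finset.mem_univ k) h

/-- Substitution x = (z+w)/2, ξ = -i(z-w)/2. -/
def fs : Fin n ⊕ Fin n → B n :=
  Sum.elim (fun j => C (2⁻¹ : ℂ) * (X (Sum.inl j) + X (Sum.inr j)))
    (fun j => C (-(I/2)) * (X (Sum.inl j) - X (Sum.inr j)))

/-- Substitution z = x + iξ, w = x - iξ. -/
def gs : Fin n ⊕ Fin n → B n :=
  Sum.elim (fun j => X (Sum.inl j) + C I * X (Sum.inr j))
    (fun j => X (Sum.inl j) - C I * X (Sum.inr j))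

def sC : B n →ₐ[ℂ] B n := aeval fs
def tC : B n →ₐ[ℂ] B n := aeval gs

lemma hC2 : (C (2⁻¹ : ℂ) : B n) * 2 = 1 := by
  rw [show (2 : B n) = C (2 : ℂ) by exact_mod_cast (C_eq_coe_nat 2).symm, ← map_mul]
  norm_num

lemma hCI : (C I : B n) * C I = -1 := by
  rw [← map_mul, I_mul_I, map_neg, map_one]

lemma hCI2 : (C (-(I/2)) : B n) * 2 = -(C I) := by
  rw [show (2 : B n) = C (2 : ℂ) by exact_mod_cast (C_eq_coe_nat 2).symm, ← map_mul, ← map_neg]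
  congr 1
  ring

lemma tC_sC (p : B n) : tC (sC p) = p := by
  have h : (tC (n := n)).comp sC = AlgHom.id ℂ (B n) := by
    apply MvPolynomial.algHom_ext
    intro i
    cases i with
    | inl j =>
      simp only [AlgHom.comp_apply, sC, tC, aeval_X, fs, Sum.elim_inl, map_add, map_sub, map_mul,
        aeval_C, algebraMap_eq, gs, Sum.elim_inr, AlgHom.id_apply]
      linear_combination (X (Sum.inl j) : B n) * hC2
    | inr j =>
      simp only [AlgHom.comp_apply, sC, tC, aeval_X, fs, Sum.elim_inr, map_sub, map_add, map_mul,
        aeval_C, algebraMap_eq, gs, Sum.elim_inl, AlgHom.id_apply]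
      linear_combination (C I * X (Sum.inr j) : B n) * hCI2 - (X (Sum.inr j) : B n) * hCI
  calc tC (sC p) = (tC.comp sC) p := rfl
  _ = p := by rw [h]; rfl

lemma sC_tC (p : B n) : sC (tC p) = p := by
  have h : (sC (n := n)).comp tC = AlgHom.id ℂ (B n) := by
    apply MvPolynomial.algHom_ext
    intro i
    cases i with
    | inl j =>
      simp only [AlgHom.comp_apply, sC, tC, aeval_X, fs, Sum.elim_inl, map_add, map_sub, map_mul,
        aeval_C, algebraMap_eq, gs, Sum.elim_inr, AlgHom.id_apply]
      linear_combination ((X (Sum.inl j) : B n) - C I * C (-(I/2)) * (X (Sum.inl j) - X (Sum.inr j))) * hC2 - (C (2⁻¹:ℂ) * (X (Sum.inl j) - X (Sum.inr j)) : B n) * hCI + (C I * C (2⁻¹:ℂ) * (X (Sum.inl j) - X (Sum.inr j)) : B n) * hCI2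
    | inr j =>
      simp only [AlgHom.comp_apply, sC, tC, aeval_X, fs, Sum.elim_inr, map_sub, map_add, map_mul,
        aeval_C, algebraMap_eq, gs, Sum.elim_inl, AlgHom.id_apply]
      linear_combination ((X (Sum.inr j) : B n) + C I * C (-(I/2)) * (X (Sum.inl j) - X (Sum.inr j))) * hC2 + (C (2⁻¹:ℂ) * (X (Sum.inl j) - X (Sum.inr j)) : B n) * hCI - (C I * C (2⁻¹:ℂ) * (X (Sum.inl j) - X (Sum.inr j)) : B n) * hCI2
  calc sC (tC p) = (sC.comp tC) p := rfl
  _ = p := by rw [h]; rfl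

def subzw : MvPolynomial (Fin n) ℂ →ₐ[ℂ] B n :=
  aeval (fun j => X (Sum.inl j) * X (Sum.inr j))

def subSqC : MvPolynomial (Fin n) ℂ →ₐ[ℂ] B n :=
  aeval (fun j => X (Sum.inl j) ^ 2 + X (Sum.inr j) ^ 2)

lemma tC_subzw (h : MvPolynomial (Fin n) ℂ) : tC (subzw h) = subSqC h := by
  have he : (tC (n := n)).comp subzw = subSqC := by
    apply MvPolynomial.algHom_ext
    intro j
    simp only [AlgHom.comp_apply, subzw, subSqC, aeval_X, tC, map_mul, gs,
      Sum.elim_inl, Sum.elim_inr]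
    linear_combination -hCI * (X (Sum.inr j) : B n) ^ 2
  calc tC (subzw h) = (tC.comp subzw) h := rfl
  _ = subSqC h := by rw [he]

lemma sC_subSqC (h : MvPolynomial (Fin n) ℂ) : sC (subSqC h) = subzw h := by
  rw [← tC_subzw, sC_tC]

/-- Intertwining: `tC` conjugates `Lop (Ku u)` into `Lop (cx (Hone u))`. -/
lemma t_intertwine (p : B n) : tC (Lop (Ku u) p) = Lop (cx (Hone u)) (tC p) := by
  induction p using MvPolynomial.induction_on with
  | C a =>
    rw [lop_C, map_zero, show (tC (C a) : B n) = C a from by simp [tC, algebraMap_eq], lop_C]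
  | add p q hp hq =>
    rw [lop_add, map_add, map_add, hp, hq, lop_add]
  | mul_X p i hp =>
    have hgen : tC (Lop (Ku u) (X i)) = Lop (cx (Hone u)) (tC (X i)) := by
      cases i with
      | inl k =>
        rw [lop_X_inl, pderiv_Ku_inr, map_mul, show (tC (C ((-2) * I * (u k : ℂ))) : B n)
            = C ((-2) * I * (u k : ℂ)) from by simp [tC, algebraMap_eq],
          show (tC (X (Sum.inl k)) : B n) = X (Sum.inl k) + C I * X (Sum.inr k) from by
            simp [tC, gs]]
        rw [lop_add, lop_X_inl, pderiv_cxHone_inr]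
        have : Lop (cx (Hone u)) (C I * X (Sum.inr k)) = C I * Lop (cx (Hone u)) (X (Sum.inr k)) := by
          rw [lop_mul, lop_C]; ring
        rw [this, lop_X_inr, pderiv_cxHone_inl]
        simp only [map_mul, map_neg, map_ofNat]
        linear_combination (-2 * (C ((u k : ℝ) : ℂ) : B n) * X (Sum.inr k)) * hCI
      | inr k =>
        rw [lop_X_inr, pderiv_Ku_inl, map_neg, map_mul, show (tC (C ((-2) * I * (u k : ℂ))) : B n)
            = C ((-2) * I * (u k : ℂ)) from by simp [tC, algebraMap_eq],
          show (tC (X (Sum.inr k)) : B n) = X (Sum.inl k) - C I * X (Sum.inr k) from by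
            simp [tC, gs]]
        rw [lop_sub, lop_X_inl, pderiv_cxHone_inr]
        have : Lop (cx (Hone u)) (C I * X (Sum.inr k)) = C I * Lop (cx (Hone u)) (X (Sum.inr k)) := by
          rw [lop_mul, lop_C]; ring
        rw [this, lop_X_inr, pderiv_cxHone_inl]
        simp only [map_mul, map_neg, map_ofNat]
        linear_combination (-2 * (C ((u k : ℝ) : ℂ) : B n) * X (Sum.inr k)) * hCI
    rw [lop_mul, map_add, map_mul, map_mul, hp, hgen, map_mul, lop_mul]

lemma s_intertwine (w : B n) : sC (Lop (cx (Hone u)) w) = Lop (Ku u) (sC w) := by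
  have h := t_intertwine u (sC w)
  rw [tC_sC] at h
  rw [← h, sC_tC]

/-- The eigenvalue of `Lop (Ku u)` on the monomial with exponent `d`. -/
def lam (d : Fin n ⊕ Fin n →₀ ℕ) : ℂ :=
  ∑ j, (-2) * I * (u j : ℂ) * ((d (Sum.inl j) : ℂ) - (d (Sum.inr j) : ℂ))

lemma X_mul_pderiv_monomial (i : Fin n ⊕ Fin n) (d : Fin n ⊕ Fin n →₀ ℕ) (a : ℂ) :
    X i * pderiv i (monomial d a) = monomial d (a * d i) := by
  rw [pderiv_monomial]
  rcases Nat.eq_zero_or_pos (d i) with h | h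
  · simp [h]
  · rw [X, monomial_mul, one_mul, add_tsub_cancel_of_le]
    exact Finsupp.single_le_iff.mpr h

lemma lop_Ku_monomial (d : Fin n ⊕ Fin n →₀ ℕ) (a : ℂ) :
    Lop (Ku u) (monomial d a) = monomial d (lam u d * a) := by
  rw [Lop]
  have step : ∀ j : Fin n,
      pderiv (Sum.inr j) (Ku u) * pderiv (Sum.inl j) (monomial d a)
        - pderiv (Sum.inl j) (Ku u) * pderiv (Sum.inr j) (monomial d a)
      = monomial d (((-2) * I * (u j : ℂ) * ((d (Sum.inl j) : ℂ) - (d (Sum.inr j) : ℂ))) * a) := by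
    intro j
    rw [pderiv_Ku_inl, pderiv_Ku_inr, mul_assoc _ (X (Sum.inl j)) _,
      mul_assoc _ (X (Sum.inr j)) _, X_mul_pderiv_monomial, X_mul_pderiv_monomial,
      C_mul_monomial, C_mul_monomial, ← map_sub]
    congr 1
    ring
  rw [Finset.sum_congr rfl fun j _ => step j, ← map_sum (monomial d)]
  congr 1
  rw [lam, Finset.sum_mul]

lemma coeff_lop_Ku (q : B n) (d₀ : Fin n ⊕ Fin n →₀ ℕ) :
    coeff d₀ (Lop (Ku u) q) = lam u d₀ * coeff d₀ q := by
  conv_lhs => rw [as_sum q]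
  rw [lop_sum]
  simp only [lop_Ku_monomial]
  rw [coeff_sum]
  simp only [coeff_monomial]
  rw [Finset.sum_ite_eq' q.support d₀ fun d => lam u d * coeff d q]
  by_cases hd : d₀ ∈ q.support
  · rw [if_pos hd]
  · rw [if_neg hd, MvPolynomial.notMem_support_iff.mp hd, mul_zero]

lemma lam_zero_of_diag (d : Fin n ⊕ Fin n →₀ ℕ) (hd : ∀ j, d (Sum.inl j) = d (Sum.inr j)) :
    lam u d = 0 := by
  rw [lam]
  refine Finset.sum_eq_zero fun j _ => ?_
  rw [hd j]
  ring

lemma lam_ne_zero (hind : LinIndepQ u) (d : Fin n ⊕ Fin n →₀ ℕ)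
    (hd : ¬ ∀ j, d (Sum.inl j) = d (Sum.inr j)) : lam u d ≠ 0 := by
  have hrw : lam u d = (-2) * I *
      (((∑ j, u j * ((d (Sum.inl j) : ℝ) - (d (Sum.inr j) : ℝ))) : ℝ) : ℂ) := by
    rw [lam]
    push_cast
    rw [Finset.mul_sum]
    exact Finset.sum_congr rfl fun j _ => by ring
  intro hzero
  rw [hrw, mul_eq_zero] at hzero
  rcases hzero with h | h
  · simp [I_ne_zero] at h
  · rw [Complex.ofReal_eq_zero] at h
    apply hd
    intro j
    have hq := hind (fun j => ((d (Sum.inl j) : ℚ) - (d (Sum.inr j) : ℚ)))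
      (by rw [← h]; exact Finset.sum_congr rfl fun j _ => by push_cast; ring) j
    have : (d (Sum.inl j) : ℚ) = (d (Sum.inr j) : ℚ) := by linarith [hq]
    exact_mod_cast this

/-- Exponent doubling `α ↦ (α, α)`. -/
def eD (α : Fin n →₀ ℕ) : Fin n ⊕ Fin n →₀ ℕ := Finsupp.sumElim α α

@[simp] lemma eD_inl (α : Fin n →₀ ℕ) (j : Fin n) : eD α (Sum.inl j) = α j :=
  Finsupp.sumElim_inl α α j

@[simp] lemma eD_inr (α : Fin n →₀ ℕ) (j : Fin n) : eD α (Sum.inr j) = α j :=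
  Finsupp.sumElim_inr α α j

lemma eD_injective : Function.Injective (eD (n := n)) := by
  intro α β h
  ext j
  have := congrArg (fun d => d (Sum.inl j)) h
  simpa using this

lemma subzw_monomial (α : Fin n →₀ ℕ) (c : ℂ) :
    subzw (monomial α c) = monomial (eD α) c := by
  rw [subzw, aeval_monomial, monomial_eq,
    Finsupp.prod_fintype _ _ fun i => pow_zero _, Finsupp.prod_fintype _ _ fun i => pow_zero _,
    Fintype.prod_sum_type]
  simp only [eD_inl, eD_inr, algebraMap_eq]
  congr 1
  rw [← Finset.prod_mul_distrib]
  exact Finset.prod_congr rfl fun j _ => mul_pow _ _ _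

lemma coeff_eD_subzw (m : MvPolynomial (Fin n) ℂ) (α : Fin n →₀ ℕ) :
    coeff (eD α) (subzw m) = coeff α m := by
  conv_lhs => rw [as_sum m]
  rw [map_sum]
  simp only [subzw_monomial]
  rw [coeff_sum]
  simp only [coeff_monomial]
  have : ∀ β ∈ m.support, (if eD β = eD α then coeff β m else 0)
      = (if β = α then coeff β m else 0) := by
    intro β _
    congr 1
    simp only [eq_iff_iff]
    exact ⟨fun h => eD_injective h, fun h => by rw [h]⟩
  rw [Finset.sum_congr rfl this, Finset.sum_ite_eq' m.support α fun β => coeff β m]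
  by_cases hα : α ∈ m.support
  · rw [if_pos hα]
  · rw [if_neg hα, MvPolynomial.notMem_support_iff.mp hα]

/-- Restriction of a doubled exponent. -/
def rD (d : Fin n ⊕ Fin n →₀ ℕ) : Fin n →₀ ℕ :=
  Finsupp.equivFunOnFinite.symm fun j => d (Sum.inl j)

@[simp] lemma rD_apply (d : Fin n ⊕ Fin n →₀ ℕ) (j : Fin n) : rD d j = d (Sum.inl j) := rfl

lemma eD_rD (d : Fin n ⊕ Fin n →₀ ℕ) (hd : ∀ j, d (Sum.inl j) = d (Sum.inr j)) :
    eD (rD d) = d := by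
  ext i
  cases i with
  | inl j => simp
  | inr j => simp [hd j]

lemma degree_eq_sum_univ {σ : Type*} [Fintype σ] (d : σ →₀ ℕ) : d.degree = ∑ i, d i :=
  Finset.sum_subset (Finset.subset_univ _) fun i _ hi => Finsupp.notMem_support_iff.mp hi

/-- The pseudo-inverse on the range. -/
def Qp (p : B n) : B n := ∑ d ∈ p.support, monomial d (coeff d p / lam u d)

/-- The normal-form part: coefficients on diagonal monomials. -/
def hBp (p : B n) : MvPolynomial (Fin n) ℂ :=
  ∑ d ∈ p.support, if ∀ j, d (Sum.inl j) = d (Sum.inr j)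
    then monomial (rD d) (coeff d p) else 0

lemma solve (hind : LinIndepQ u) (p : B n) :
    Lop (Ku u) (Qp u p) = p - subzw (hBp p) := by
  rw [Qp, lop_sum, hBp, map_sum]
  conv_rhs => rw [show p - ∑ d ∈ p.support, subzw (if ∀ j, d (Sum.inl j) = d (Sum.inr j)
    then monomial (rD d) (coeff d p) else 0) = (∑ d ∈ p.support, monomial d (coeff d p))
    - ∑ d ∈ p.support, subzw (if ∀ j, d (Sum.inl j) = d (Sum.inr j)
    then monomial (rD d) (coeff d p) else 0) from by rw [← as_sum]]
  rw [← Finset.sum_sub_distrib]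
  refine Finset.sum_congr rfl fun d hd => ?_
  rw [lop_Ku_monomial]
  by_cases hdg : ∀ j, d (Sum.inl j) = d (Sum.inr j)
  · rw [if_pos hdg, subzw_monomial, eD_rD d hdg, lam_zero_of_diag u d hdg, zero_mul,
      monomial_zero, sub_self]
  · rw [if_neg hdg, map_zero, sub_zero, mul_comm,
      div_mul_cancel₀ _ (lam_ne_zero u hind d hdg)]

lemma hBp_homog (p : B n) (hp : p.IsHomogeneous (2 * N)) :
    (hBp p).IsHomogeneous N := by
  apply IsHomogeneous.sum
  intro d hd
  by_cases hdg : ∀ j, d (Sum.inl j) = d (Sum.inr j)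
  · rw [if_pos hdg]
    apply isHomogeneous_monomial
    have hdeg : d.degree = 2 * N := by
      rw [degree_eq_weight_one]
      exact hp (MvPolynomial.mem_support_iff.mp hd)
    rw [degree_eq_sum_univ] at hdeg
    rw [Fintype.sum_sum_type] at hdeg
    have hsum : ∑ j, d (Sum.inl j) = N := by
      have : ∑ j, d (Sum.inr j) = ∑ j, d (Sum.inl j) :=
        Finset.sum_congr rfl fun j _ => (hdg j).symm
      omega
    rw [degree_eq_sum_univ]
    simpa using hsum
  · rw [if_neg hdg]
    exact isHomogeneous_zero _ _ _

lemma fs_homog (i : Fin n ⊕ Fin n) : (fs (n := n) i).IsHomogeneous 1 := by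
  cases i with
  | inl j => exact ((isHomogeneous_X ℂ (Sum.inl j)).add (isHomogeneous_X ℂ (Sum.inr j))).C_mul _
  | inr j => exact ((isHomogeneous_X ℂ (Sum.inl j)).sub (isHomogeneous_X ℂ (Sum.inr j))).C_mul _

lemma descend {σ : Type*} (q : MvPolynomial σ ℂ) (hq : cj q = q) :
    ∃ r : MvPolynomial σ ℝ, cx r = q := by
  refine ⟨∑ d ∈ q.support, monomial d ((coeff d q).re), ?_⟩
  have hreal : ∀ d : σ →₀ ℕ, (((coeff d q).re : ℝ) : ℂ) = coeff d q := by
    intro d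
    have h1 := congrArg (coeff d) hq
    rw [cj, coeff_map] at h1
    exact Complex.conj_eq_iff_re.mp h1
  rw [cx, map_sum]
  simp only [map_monomial]
  have : ∀ d ∈ q.support, (monomial d (algebraMap ℝ ℂ (coeff d q).re) : MvPolynomial σ ℂ)
      = monomial d (coeff d q) := by
    intro d _
    rw [show algebraMap ℝ ℂ (coeff d q).re = coeff d q from hreal d]
  rw [Finset.sum_congr rfl this, ← as_sum]

lemma cj_subSqC (h : MvPolynomial (Fin n) ℂ) : cj (subSqC h) = subSqC (cj h) := by
  have he : (cj (σ := Fin n ⊕ Fin n)).comp (subSqC (n := n) : MvPolynomial (Fin n) ℂ →+* B n)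
      = ((subSqC (n := n) : MvPolynomial (Fin n) ℂ →+* B n)).comp (cj (σ := Fin n)) := by
    apply ringHom_ext
    · intro a
      simp [cj, subSqC, aeval_C, algebraMap_eq]
    · intro i
      simp [cj, subSqC]
  exact DFunLike.congr_fun he h

lemma cx_subSq (r : MvPolynomial (Fin n) ℝ) : cx (subSq r) = subSqC (cx r) := by
  have he : (cx (σ := Fin n ⊕ Fin n)).comp
        (aeval (fun j => X (Sum.inl j) ^ 2 + X (Sum.inr j) ^ 2) :
          MvPolynomial (Fin n) ℝ →ₐ[ℝ] MvPolynomial (Fin n ⊕ Fin n) ℝ).toRingHom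
      = ((subSqC (n := n) : MvPolynomial (Fin n) ℂ →+* B n)).comp (cx (σ := Fin n)) := by
    apply ringHom_ext
    · intro a
      simp [cx, subSqC, aeval_C, algebraMap_eq]
    · intro i
      simp [cx, subSqC]
  exact DFunLike.congr_fun he r

end
end Stmt7

open Stmt7 Complex
theorem stmt7 {n N : ℕ} (u : Fin n → ℝ) (hpos : ∀ j, 0 < u j) (hind : LinIndepQ u)
    (R : MvPolynomial (Fin n ⊕ Fin n) ℝ) (hR : R.IsHomogeneous (2 * N)) :
    ∃ h : MvPolynomial (Fin n) ℝ, h.IsHomogeneous N ∧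
      (∃ G : MvPolynomial (Fin n ⊕ Fin n) ℝ, poisson (Hone u) G = R - subSq h) ∧
      ∀ h' : MvPolynomial (Fin n) ℝ, h'.IsHomogeneous N →
        (∃ G' : MvPolynomial (Fin n ⊕ Fin n) ℝ, poisson (Hone u) G' = R - subSq h') →
        h' = h := by
  classical
  -- the transformed polynomial
  set p : B n := sC (cx R) with hp_def
  have hphom : p.IsHomogeneous (2 * N) := by
    have h1 : (cx R).IsHomogeneous (2 * N) := hR.map _
    have h2 := h1.aeval fs fs_homog
    simpa [hp_def, sC, one_mul] using h2
  set hB : MvPolynomial (Fin n) ℂ := hBp p with hB_def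
  have E1 : Lop (Ku u) (Qp u p) = p - subzw (hBp p) := solve u hind p
  have E2 : Lop (cx (Hone u)) (tC (Qp u p)) = cx R - subSqC hB := by
    have h1 := congrArg (tC (n := n)) E1
    rw [t_intertwine] at h1
    rw [h1, map_sub, hp_def, tC_sC, tC_subzw]
  have E3 : Lop (cx (Hone u)) (cj (tC (Qp u p))) = cx R - subSqC (cj hB) := by
    have h1 := congrArg (cj (σ := Fin n ⊕ Fin n)) E2
    rw [cj_lop _ _ (cj_cx _)] at h1
    rw [h1, map_sub, cj_cx, cj_subSqC]
  set GA : B n := (2⁻¹ : ℂ) • (tC (Qp u p) + cj (tC (Qp u p))) with hGA_def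
  set hA : MvPolynomial (Fin n) ℂ := (2⁻¹ : ℂ) • (hB + cj hB) with hA_def
  have E4 : Lop (cx (Hone u)) GA = cx R - subSqC hA := by
    rw [hGA_def, lop_smul, lop_add, E2, E3, hA_def, map_smul, map_add]
    have harr : (cx R - subSqC hB) + (cx R - subSqC (cj hB))
        = (2 : ℂ) • cx R - (subSqC hB + subSqC (cj hB)) := by
      rw [two_smul]; abel
    rw [harr, smul_sub, smul_smul]
    norm_num
  have cj_smul' : ∀ (a : ℂ) (q : B n), cj (a • q) = (starRingEnd ℂ a) • cj q := by
    intro a q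
    rw [← C_mul', cj_C_mul, C_mul']
  have hstar : (starRingEnd ℂ) (2⁻¹ : ℂ) = 2⁻¹ := by rw [map_inv₀, map_ofNat]
  have hGAreal : cj GA = GA := by
    rw [hGA_def, cj_smul', hstar, map_add, cj_cj, add_comm (cj (tC (Qp u p)))]
  have cj_smul'' : ∀ (a : ℂ) (q : MvPolynomial (Fin n) ℂ),
      cj (a • q) = (starRingEnd ℂ a) • cj q := by
    intro a q
    rw [← C_mul', cj, map_mul, map_C, C_mul']
  have hhAreal : cj hA = hA := by
    rw [hA_def, cj_smul'', hstar, map_add, cj_cj, add_comm (cj hB)]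
  obtain ⟨G, hG⟩ := descend GA hGAreal
  obtain ⟨h, hh⟩ := descend hA hhAreal
  have hhAhomog : hA.IsHomogeneous N := by
    have h1 : hB.IsHomogeneous N := hBp_homog p hphom
    have h2 : (cj hB).IsHomogeneous N := h1.map _
    have h3 := h1.add h2
    rw [hA_def, ← C_mul']
    exact h3.C_mul _
  have hhomog : h.IsHomogeneous N := by
    intro d hd
    apply hhAhomog
    rw [← hh, cx, coeff_map]
    simpa using hd
  have hmain : poisson (Hone u) G = R - subSq h := by
    apply cx_injective
    rw [poisson_eq_lop, cx_lop, hG, E4, ← hh, map_sub, cx_subSq]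
  refine ⟨h, hhomog, ⟨G, hmain⟩, ?_⟩
  -- uniqueness
  intro h' hh' ⟨G', hG'⟩
  have hdiff : subSq (h - h') = poisson (Hone u) (G' - G) := by
    rw [poisson_eq_lop, lop_sub, ← poisson_eq_lop, ← poisson_eq_lop, hG', hmain]
    rw [show subSq (h - h') = subSq h - subSq h' from by simp [subSq, map_sub]]
    ring
  have hcx : subzw (cx (h - h')) = Lop (Ku u) (sC (cx (G' - G))) := by
    have h1 := congrArg (cx (σ := Fin n ⊕ Fin n)) hdiff
    rw [poisson_eq_lop, cx_lop, cx_subSq] at h1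
    have h2 := congrArg (sC (n := n)) h1
    rw [sC_subSqC, s_intertwine] at h2
    exact h2
  have hz : cx (h - h') = 0 := by
    apply MvPolynomial.ext
    intro α
    have h1 := congrArg (coeff (eD α)) hcx
    rw [coeff_eD_subzw, coeff_lop_Ku, lam_zero_of_diag u (eD α) (fun j => by simp),
      zero_mul] at h1
    simpa using h1
  have : h - h' = 0 := cx_injective (by rw [hz, map_zero])
  exact (sub_eq_zero.mp this).symm
end

section
/- Let u_1,...,u_n be positive reals linearly independent over ℚ, H_1 = Σ_j u_j(x_j²+ξ_j²), and let R be homogeneous of degree 2N with the additional symmetry R(±x_1,...,±x_n, ±ξ_1,...,±ξ_n) = R(x,ξ) for each sign flip applied simultaneously to x_j and ξ_j. Then the unique solution G of {H_1,G} = R − H (with G spanned by off-diagonal monomials z^α z̄^β, α ≠ β) also has this symmetry. -/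
open MvPolynomial

noncomputable def LV {n : ℕ} (u : Fin n → ℝ)
    (P : MvPolynomial (Fin n ⊕ Fin n) ℂ) : MvPolynomial (Fin n ⊕ Fin n) ℂ :=
  C Complex.I * ∑ j, C (u j : ℂ) *
    (X (Sum.inl j) * pderiv (Sum.inl j) P - X (Sum.inr j) * pderiv (Sum.inr j) P)

def IsOffDiagPoly {n : ℕ} (N : ℕ) (G : MvPolynomial (Fin n ⊕ Fin n) ℂ) : Prop :=
  ∀ d ∈ G.support, (∑ v ∈ d.support, d v) = 2 * N ∧ ¬ IsDiagExp d

def IsDiagPoly {n : ℕ} (N : ℕ) (H : MvPolynomial (Fin n ⊕ Fin n) ℂ) : Prop :=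
  ∀ d ∈ H.support, (∑ v ∈ d.support, d v) = 2 * N ∧ IsDiagExp d

/-- The sign flip `(x_j, ξ_j) ↦ (ε_j x_j, ε_j ξ_j)`, which in the complex
coordinates `z_j = x_j + iξ_j` sends `z_j ↦ ε_j z_j` and `z̄_j ↦ ε_j z̄_j`. -/
noncomputable def signFlip {n : ℕ} (ε : Fin n → ℝ) :
    MvPolynomial (Fin n ⊕ Fin n) ℂ →ₐ[ℂ] MvPolynomial (Fin n ⊕ Fin n) ℂ :=
  aeval (Sum.elim (fun j => C (ε j : ℂ) * X (Sum.inl j))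
                  (fun j => C (ε j : ℂ) * X (Sum.inr j)))

/-!
Both operators act diagonally on monomials `z^α z̄^β`: `LV u` multiplies by
`i ∑ u_j (α_j - β_j)`, which is nonzero off the diagonal by the `ℚ`-independence of the `u_j`,
and a sign flip multiplies by `∏ ε_j^(α_j + β_j)`. Comparing coefficients in `{H_1, G} = R - H`,
every monomial of `G` therefore occurs in `R`, where the sign flips act trivially.
-/

namespace MvPolynomial

variable {σ R : Type*} [CommSemiring R]

lemma coeff_X_mul_pderiv (v : σ) (d : σ →₀ ℕ) (P : MvPolynomial σ R) :
    coeff d (X v * pderiv v P) = d v * coeff d P := by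
  classical
  induction P using MvPolynomial.induction_on' with
  | monomial s a =>
    rw [X_mul_pderiv_monomial, smul_monomial, coeff_monomial, coeff_monomial]
    split_ifs with h
    · rw [h, nsmul_eq_mul]
    · rw [mul_zero]
  | add p q hp hq => rw [map_add, mul_add, coeff_add, hp, hq, coeff_add, mul_add]

lemma aeval_C_mul_X_monomial (c : σ → R) (s : σ →₀ ℕ) (a : R) :
    aeval (fun v => C (c v) * X v) (monomial s a) =
      monomial s ((s.prod fun v k => c v ^ k) * a) := by
  rw [aeval_monomial, monomial_eq, algebraMap_eq]
  simp only [mul_pow, Finsupp.prod, Finset.prod_mul_distrib, C_mul, map_prod, map_pow]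
  ring

lemma coeff_aeval_C_mul_X (c : σ → R) (d : σ →₀ ℕ) (P : MvPolynomial σ R) :
    coeff d (aeval (fun v => C (c v) * X v) P) = (d.prod fun v k => c v ^ k) * coeff d P := by
  classical
  induction P using MvPolynomial.induction_on' with
  | monomial s a =>
    rw [aeval_C_mul_X_monomial, coeff_monomial, coeff_monomial]
    split_ifs with h
    · rw [h]
    · rw [mul_zero]
  | add p q hp hq => rw [map_add, coeff_add, hp, hq, coeff_add, mul_add]

end MvPolynomial

section

variable {n : ℕ}

noncomputable def lvEigenvalue (u : Fin n → ℝ) (d : (Fin n ⊕ Fin n) →₀ ℕ) : ℂ :=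
  Complex.I * ∑ j, (u j : ℂ) * ((d (Sum.inl j) : ℂ) - d (Sum.inr j))

lemma coeff_LV (u : Fin n → ℝ) (d : (Fin n ⊕ Fin n) →₀ ℕ) (P : MvPolynomial (Fin n ⊕ Fin n) ℂ) :
    coeff d (LV u P) = lvEigenvalue u d * coeff d P := by
  simp only [LV, coeff_C_mul, coeff_sum, coeff_sub, coeff_X_mul_pderiv]
  rw [lvEigenvalue, mul_assoc, Finset.sum_mul]
  exact congrArg _ (Finset.sum_congr rfl fun j _ => by ring)

lemma lvEigenvalue_ne_zero {u : Fin n → ℝ} (hind : LinIndepQ u) {d : (Fin n ⊕ Fin n) →₀ ℕ}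
    (hd : ¬ IsDiagExp d) : lvEigenvalue u d ≠ 0 := by
  intro h
  have hreal : ∑ j, (((d (Sum.inl j) : ℚ) - d (Sum.inr j) : ℚ) : ℝ) * u j = 0 := by
    have hsum := (mul_eq_zero.1 h).resolve_left Complex.I_ne_zero
    apply Complex.ofReal_injective
    push_cast
    exact (Finset.sum_congr rfl fun j _ => by ring).trans hsum
  exact hd fun j => by exact_mod_cast sub_eq_zero.1 (hind _ hreal j)

lemma coeff_eq_lvEigenvalue_mul_of_LV_eq {N : ℕ} {u : Fin n → ℝ}
    {R G H : MvPolynomial (Fin n ⊕ Fin n) ℂ} (hH : IsDiagPoly N H) (heq : LV u G = R - H)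
    {d : (Fin n ⊕ Fin n) →₀ ℕ} (hd : ¬ IsDiagExp d) :
    coeff d R = lvEigenvalue u d * coeff d G := by
  have hHd : coeff d H = 0 := not_ne_iff.1 fun h => hd (hH d (mem_support_iff.2 h)).2
  rw [← coeff_LV, heq, coeff_sub, hHd, sub_zero]

lemma signFlip_eq_aeval (ε : Fin n → ℝ) :
    signFlip ε = aeval fun v => C ((Sum.elim ε ε v : ℝ) : ℂ) * X v := by
  unfold signFlip
  congr 1
  funext v
  rcases v with j | j <;> rfl

lemma signFlip_eq_self_iff (ε : Fin n → ℝ) (P : MvPolynomial (Fin n ⊕ Fin n) ℂ) :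
    signFlip ε P = P ↔
      ∀ d ∈ P.support, (d.prod fun v k => ((Sum.elim ε ε v : ℝ) : ℂ) ^ k) = 1 := by
  simp only [MvPolynomial.ext_iff, signFlip_eq_aeval, coeff_aeval_C_mul_X, mul_left_eq_self₀,
    mem_support_iff]
  exact forall_congr' fun d => or_iff_not_imp_right

end

theorem stmt8_general {n N : ℕ} (u : Fin n → ℝ) (hind : LinIndepQ u)
    (R G H : MvPolynomial (Fin n ⊕ Fin n) ℂ)
    (hsym : ∀ ε : Fin n → ℝ, (∀ j, ε j = 1 ∨ ε j = -1) → signFlip ε R = R)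
    (hG : IsOffDiagPoly N G) (hH : IsDiagPoly N H)
    (heq : LV u G = R - H) :
    ∀ ε : Fin n → ℝ, (∀ j, ε j = 1 ∨ ε j = -1) → signFlip ε G = G := by
  intro ε hε
  rw [signFlip_eq_self_iff]
  intro d hdG
  obtain ⟨-, hoff⟩ := hG d hdG
  refine (signFlip_eq_self_iff ε R).1 (hsym ε hε) d ?_
  rw [mem_support_iff, coeff_eq_lvEigenvalue_mul_of_LV_eq hH heq hoff]
  exact mul_ne_zero (lvEigenvalue_ne_zero hind hoff) (mem_support_iff.1 hdG)

theorem stmt8 {n N : ℕ} (u : Fin n → ℝ) (hpos : ∀ j, 0 < u j) (hind : LinIndepQ u)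
    (R G H : MvPolynomial (Fin n ⊕ Fin n) ℂ)
    (hR : R.IsHomogeneous (2 * N))
    (hsym : ∀ ε : Fin n → ℝ, (∀ j, ε j = 1 ∨ ε j = -1) → signFlip ε R = R)
    (hG : IsOffDiagPoly N G) (hH : IsDiagPoly N H)
    (heq : LV u G = R - H) :
    ∀ ε : Fin n → ℝ, (∀ j, ε j = 1 ∨ ε j = -1) → signFlip ε G = G :=
  stmt8_general u hind R G H hsym hG hH heq
end
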